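/- arXiv:2102.03191 — 4 statements merged into one kernel-verified Lean document; each statement's English description precedes it below -/
import Mathlib

section
/- Let l > 0 and let φ ∈ H¹₀(0,1), ψ ∈ H¹(0,1), w ∈ H¹(0,1) be real-valued functions such that ψ and w have zero mean on (0,1). If ‖φ' + ψ + l·w‖²_{L²} = 0, ‖ψ'‖²_{L²} = 0 and ‖w' − l·φ‖²_{L²} = 0, then ψ = 0 and there exists a constant c such that φ(x) = −c·sin(l·x) and w(x) = c·cos(l·x), where moreover c = 0 or l = m₀π for some integer m₀. -/
/-! With `ψ' = 0` and zero mean, `ψ` vanishes, and the remaining equations say that `(φ, w)`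
solves the harmonic system `φ' = -l w`, `w' = l φ`. Rotating by the angle `-l x` turns every
solution into a constant vector, so `(φ, w)` is the rotation of its initial value `(0, c)`.
The boundary condition `φ 1 = -c sin l = 0` then forces `c = 0` or `l ∈ πℤ`. -/

open Real MeasureTheory intervalIntegral Set

theorem eq_zero_of_integral_sq_eq_zero {a b : ℝ} {f : ℝ → ℝ} (hab : a < b)
    (hf : ContinuousOn f (Icc a b)) (h : ∫ x in a..b, f x ^ 2 = 0) : ∀ x ∈ Icc a b, f x = 0 := by
  have hsq : ContinuousOn (fun x => f x ^ 2) (Icc a b) := hf.pow 2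
  have hint : IntervalIntegrable (fun x => f x ^ 2) volume a b :=
    hsq.intervalIntegrable_of_Icc hab.le
  have hae := (integral_eq_zero_iff_of_le_of_nonneg_ae hab.le
    (Filter.Eventually.of_forall fun x => sq_nonneg (f x)) hint).1 h
  rw [restrict_Ioc_eq_restrict_Icc] at hae
  intro x hx
  simpa using Measure.eqOn_Icc_of_ae_eq volume hab.ne hae hsq continuousOn_const hx

theorem eq_left_of_hasDerivAt_zero {a b : ℝ} {f : ℝ → ℝ}
    (hf : ∀ x ∈ Icc a b, HasDerivAt f 0 x) : ∀ x ∈ Icc a b, f x = f a :=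
  constant_of_has_deriv_right_zero (HasDerivAt.continuousOn hf)
    fun x hx => (hf x (Ico_subset_Icc_self hx)).hasDerivWithinAt

theorem eq_zero_of_hasDerivAt_zero_of_integral_eq_zero {a b : ℝ} {f : ℝ → ℝ} (hab : a < b)
    (hf : ∀ x ∈ Icc a b, HasDerivAt f 0 x) (hmean : ∫ x in a..b, f x = 0) :
    ∀ x ∈ Icc a b, f x = 0 := by
  have hconst := eq_left_of_hasDerivAt_zero hf
  have hfa : f a = 0 := by
    have hint : ∫ x in a..b, f x = ∫ _ in a..b, f a :=
      integral_congr fun x hx => hconst x (uIcc_of_le hab.le ▸ hx)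
    rw [hmean, intervalIntegral.integral_const, smul_eq_mul, eq_comm, mul_eq_zero] at hint
    exact hint.resolve_left (sub_ne_zero.2 hab.ne')
  intro x hx
  rw [hconst x hx, hfa]

theorem harmonic_system_eq_rotation {l b : ℝ} {φ w : ℝ → ℝ}
    (hφ : ∀ x ∈ Icc 0 b, HasDerivAt φ (-(l * w x)) x)
    (hw : ∀ x ∈ Icc 0 b, HasDerivAt w (l * φ x) x) :
    ∀ x ∈ Icc 0 b, φ x = φ 0 * cos (l * x) - w 0 * sin (l * x) ∧
      w x = φ 0 * sin (l * x) + w 0 * cos (l * x) := by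
  have hlx (x : ℝ) : HasDerivAt (fun y => l * y) l x := by
    simpa using (hasDerivAt_id x).const_mul l
  have hF : ∀ x ∈ Icc 0 b, HasDerivAt (fun y => φ y * cos (l * y) + w y * sin (l * y)) 0 x := by
    intro x hx
    exact (((hφ x hx).mul (hlx x).cos).add ((hw x hx).mul (hlx x).sin)).congr_deriv (by ring)
  have hG : ∀ x ∈ Icc 0 b, HasDerivAt (fun y => -φ y * sin (l * y) + w y * cos (l * y)) 0 x := by
    intro x hx
    exact (((hφ x hx).neg.mul (hlx x).sin).add ((hw x hx).mul (hlx x).cos)).congr_deriv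
      (by rw [Pi.neg_apply]; ring)
  intro x hx
  have hFx := eq_left_of_hasDerivAt_zero hF x hx
  have hGx := eq_left_of_hasDerivAt_zero hG x hx
  simp only [mul_zero, cos_zero, sin_zero, mul_one] at hFx hGx
  have hpyth := sin_sq_add_cos_sq (l * x)
  constructor
  · linear_combination cos (l * x) * hFx - sin (l * x) * hGx - φ x * hpyth
  · linear_combination sin (l * x) * hFx + cos (l * x) * hGx - w x * hpyth

theorem bresse_energy_kernel_general
    (l : ℝ)
    (φ ψ w φ' ψ' w' : ℝ → ℝ)
    (hφ : ∀ x ∈ Set.Icc (0:ℝ) 1, HasDerivAt φ (φ' x) x)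
    (hψ : ∀ x ∈ Set.Icc (0:ℝ) 1, HasDerivAt ψ (ψ' x) x)
    (hw : ∀ x ∈ Set.Icc (0:ℝ) 1, HasDerivAt w (w' x) x)
    (hφc : ContinuousOn φ' (Set.Icc 0 1))
    (hψc : ContinuousOn ψ' (Set.Icc 0 1))
    (hwc : ContinuousOn w' (Set.Icc 0 1))
    (hφ0 : φ 0 = 0) (hφ1 : φ 1 = 0)
    (hψm : ∫ x in (0:ℝ)..1, ψ x = 0)
    (h1 : ∫ x in (0:ℝ)..1, (φ' x + ψ x + l * w x)^2 = 0)
    (h2 : ∫ x in (0:ℝ)..1, (ψ' x)^2 = 0)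
    (h3 : ∫ x in (0:ℝ)..1, (w' x - l * φ x)^2 = 0) :
    (∀ x ∈ Set.Icc (0:ℝ) 1, ψ x = 0) ∧
    ∃ c : ℝ, (∀ x ∈ Set.Icc (0:ℝ) 1,
        φ x = -c * Real.sin (l * x) ∧ w x = c * Real.cos (l * x)) ∧
      (c = 0 ∨ ∃ m₀ : ℤ, l = m₀ * Real.pi) := by
  have hψ' := eq_zero_of_integral_sq_eq_zero one_pos hψc h2
  have hψ0 := eq_zero_of_hasDerivAt_zero_of_integral_eq_zero one_pos
    (fun x hx => (hψ x hx).congr_deriv (hψ' x hx)) hψm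
  have hφ' := eq_zero_of_integral_sq_eq_zero (f := fun x => φ' x + ψ x + l * w x) one_pos
    ((hφc.add (HasDerivAt.continuousOn hψ)).add
      (continuousOn_const.mul (HasDerivAt.continuousOn hw))) h1
  have hw' := eq_zero_of_integral_sq_eq_zero (f := fun x => w' x - l * φ x) one_pos
    (hwc.sub (continuousOn_const.mul (HasDerivAt.continuousOn hφ))) h3
  have hsol := harmonic_system_eq_rotation (l := l) (b := 1)
    (fun x hx => (hφ x hx).congr_deriv (by linarith [hφ' x hx, hψ0 x hx]))
    (fun x hx => (hw x hx).congr_deriv (by linarith [hw' x hx]))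
  refine ⟨hψ0, w 0, fun x hx => ?_, ?_⟩
  · simpa [hφ0] using hsol x hx
  · have hsin : w 0 * sin l = 0 := by
      simpa [hφ0, hφ1] using (hsol 1 (by norm_num)).1
    refine (mul_eq_zero.1 hsin).imp id fun hl => ?_
    obtain ⟨n, hn⟩ := sin_eq_zero_iff.1 hl
    exact ⟨n, hn.symm⟩

/-- Kernel of the energy seminorm of the Bresse system. -/
theorem bresse_energy_kernel
    (l : ℝ) (hl : 0 < l)
    (φ ψ w φ' ψ' w' : ℝ → ℝ)
    (hφ : ∀ x ∈ Set.Icc (0:ℝ) 1, HasDerivAt φ (φ' x) x)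
    (hψ : ∀ x ∈ Set.Icc (0:ℝ) 1, HasDerivAt ψ (ψ' x) x)
    (hw : ∀ x ∈ Set.Icc (0:ℝ) 1, HasDerivAt w (w' x) x)
    (hφc : ContinuousOn φ' (Set.Icc 0 1))
    (hψc : ContinuousOn ψ' (Set.Icc 0 1))
    (hwc : ContinuousOn w' (Set.Icc 0 1))
    (hφ0 : φ 0 = 0) (hφ1 : φ 1 = 0)
    (hψm : ∫ x in (0:ℝ)..1, ψ x = 0)
    (hwm : ∫ x in (0:ℝ)..1, w x = 0)
    (h1 : ∫ x in (0:ℝ)..1, (φ' x + ψ x + l * w x)^2 = 0)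
    (h2 : ∫ x in (0:ℝ)..1, (ψ' x)^2 = 0)
    (h3 : ∫ x in (0:ℝ)..1, (w' x - l * φ x)^2 = 0) :
    (∀ x ∈ Set.Icc (0:ℝ) 1, ψ x = 0) ∧
    ∃ c : ℝ, (∀ x ∈ Set.Icc (0:ℝ) 1,
        φ x = -c * Real.sin (l * x) ∧ w x = c * Real.cos (l * x)) ∧
      (c = 0 ∨ ∃ m₀ : ℤ, l = m₀ * Real.pi) :=
  bresse_energy_kernel_general l φ ψ w φ' ψ' w' hφ hψ hw hφc hψc hwc hφ0 hφ1 hψm h1 h2 h3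
end

section
/- Let l > 0 with l ≠ mπ for all integers m. Let φ ∈ H¹₀(0,1), ψ, w ∈ H¹(0,1) with ∫₀¹ ψ = ∫₀¹ w = 0. If φ' + ψ + l·w = 0, ψ' = 0 and w' − l·φ = 0 almost everywhere on (0,1), then φ = ψ = w = 0. -/
open Real MeasureTheory intervalIntegral Set

/-!
The second equation makes `ψ` constant, and its zero mean makes it vanish. The remaining equations
say that `(φ, w)` solves the rotation system `φ' = -l w`, `w' = l φ`, whose solutions conserve
`φ² + w²` and are therefore rotations of their initial value. Since `φ 0 = 0`, this gives
`φ x = -w 0 sin (l x)`, and `φ 1 = 0` forces `w 0 = 0` because `sin l ≠ 0` when `l ∉ πℤ`.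
-/

section RotationSystem

variable {a b l : ℝ} {φ w φ' w' : ℝ → ℝ}

theorem constant_of_hasDerivAt_ae_zero {f f' : ℝ → ℝ}
    (hf : ∀ x ∈ Icc a b, HasDerivAt f (f' x) x)
    (hf' : ∀ᵐ x ∂volume.restrict (Ioo a b), f' x = 0) :
    ∀ x ∈ Icc a b, f x = f a := by
  intro x hx
  have hsub : uIcc a x ⊆ Icc a b := by
    rw [uIcc_of_le hx.1]
    exact Icc_subset_Icc_right hx.2
  have hzero : f' =ᵐ[volume.restrict (Ioc a x)] 0 := by
    rw [← Measure.restrict_congr_set Ioo_ae_eq_Ioc]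
    exact ae_restrict_of_ae_restrict_of_subset (Ioo_subset_Ioo_right hx.2) hf'
  have hint : IntervalIntegrable f' volume a x :=
    (intervalIntegrable_iff_integrableOn_Ioc_of_le hx.1).2
      (integrableOn_zero.congr_fun_ae hzero.symm)
  have hftc := integral_eq_sub_of_hasDerivAt (fun y hy => hf y (hsub hy)) hint
  rw [integral_of_le hx.1, integral_congr_ae hzero, Pi.zero_def,
    MeasureTheory.integral_zero] at hftc
  linarith

theorem sq_add_sq_const_of_rotationSystem
    (hφ : ∀ x ∈ Icc a b, HasDerivAt φ (φ' x) x) (hw : ∀ x ∈ Icc a b, HasDerivAt w (w' x) x)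
    (hφ' : ∀ᵐ x ∂volume.restrict (Ioo a b), φ' x = -(l * w x))
    (hw' : ∀ᵐ x ∂volume.restrict (Ioo a b), w' x = l * φ x) :
    ∀ x ∈ Icc a b, φ x ^ 2 + w x ^ 2 = φ a ^ 2 + w a ^ 2 := by
  refine constant_of_hasDerivAt_ae_zero (f := fun x => φ x ^ 2 + w x ^ 2)
    (fun x hx => ((hφ x hx).pow 2).add ((hw x hx).pow 2)) ?_
  filter_upwards [hφ', hw'] with x hφx hwx
  rw [hφx, hwx]
  ring

theorem eq_rotate_of_rotationSystem
    (hφ : ∀ x ∈ Icc a b, HasDerivAt φ (φ' x) x) (hw : ∀ x ∈ Icc a b, HasDerivAt w (w' x) x)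
    (hφ' : ∀ᵐ x ∂volume.restrict (Ioo a b), φ' x = -(l * w x))
    (hw' : ∀ᵐ x ∂volume.restrict (Ioo a b), w' x = l * φ x) :
    ∀ x ∈ Icc a b, φ x = φ a * cos (l * (x - a)) - w a * sin (l * (x - a)) ∧
      w x = φ a * sin (l * (x - a)) + w a * cos (l * (x - a)) := by
  have hθ (x : ℝ) : HasDerivAt (fun y => l * (y - a)) l x := by
    simpa using ((hasDerivAt_id x).sub_const a).const_mul l
  have hcos (x : ℝ) : HasDerivAt (fun y => cos (l * (y - a))) (-sin (l * (x - a)) * l) x :=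
    (hasDerivAt_cos _).comp x (hθ x)
  have hsin (x : ℝ) : HasDerivAt (fun y => sin (l * (y - a))) (cos (l * (x - a)) * l) x :=
    (hasDerivAt_sin _).comp x (hθ x)
  -- The difference of two solutions is again a solution, and it starts at the origin.
  have henergy := sq_add_sq_const_of_rotationSystem (l := l)
    (φ := fun x => φ x - (φ a * cos (l * (x - a)) - w a * sin (l * (x - a))))
    (w := fun x => w x - (φ a * sin (l * (x - a)) + w a * cos (l * (x - a))))
    (fun x hx => (hφ x hx).sub (((hcos x).const_mul _).sub ((hsin x).const_mul _)))
    (fun x hx => (hw x hx).sub (((hsin x).const_mul _).add ((hcos x).const_mul _)))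
    (by filter_upwards [hφ'] with x hx; rw [hx]; ring)
    (by filter_upwards [hw'] with x hx; rw [hx]; ring)
  intro x hx
  have hzero := henergy x hx
  simp only [sub_self, mul_zero, cos_zero, sin_zero, mul_one, sub_zero, zero_add, sq,
    add_zero] at hzero
  obtain ⟨hp, hq⟩ := mul_self_add_mul_self_eq_zero.1 hzero
  exact ⟨sub_eq_zero.1 hp, sub_eq_zero.1 hq⟩

end RotationSystem

theorem bresse_energy_definite_general
    (l : ℝ) (hlπ : ∀ m : ℤ, l ≠ m * Real.pi)
    (φ ψ w φ' ψ' w' : ℝ → ℝ)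
    (hφ : ∀ x ∈ Set.Icc (0:ℝ) 1, HasDerivAt φ (φ' x) x)
    (hψ : ∀ x ∈ Set.Icc (0:ℝ) 1, HasDerivAt ψ (ψ' x) x)
    (hw : ∀ x ∈ Set.Icc (0:ℝ) 1, HasDerivAt w (w' x) x)
    (hφ0 : φ 0 = 0) (hφ1 : φ 1 = 0)
    (hψm : ∫ x in (0:ℝ)..1, ψ x = 0)
    (h1 : ∀ᵐ x ∂(volume.restrict (Set.Ioo (0:ℝ) 1)), φ' x + ψ x + l * w x = 0)
    (h2 : ∀ᵐ x ∂(volume.restrict (Set.Ioo (0:ℝ) 1)), ψ' x = 0)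
    (h3 : ∀ᵐ x ∂(volume.restrict (Set.Ioo (0:ℝ) 1)), w' x - l * φ x = 0) :
    ∀ x ∈ Set.Icc (0:ℝ) 1, φ x = 0 ∧ ψ x = 0 ∧ w x = 0 := by
  have hψconst := constant_of_hasDerivAt_ae_zero hψ h2
  have hψ0 : ψ 0 = 0 := by
    rw [integral_congr (fun x hx => hψconst x (by rwa [uIcc_of_le zero_le_one] at hx))] at hψm
    simpa using hψm
  have hrot := eq_rotate_of_rotationSystem (l := l) hφ hw
    (by filter_upwards [h1, ae_restrict_mem measurableSet_Ioo] with x hx hx01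
        rw [hψconst x (Ioo_subset_Icc_self hx01), hψ0] at hx
        linarith)
    (by filter_upwards [h3] with x hx; linarith)
  have hw0 : w 0 = 0 := by
    have hsin : sin l ≠ 0 := fun h => by
      obtain ⟨m, hm⟩ := sin_eq_zero_iff.mp h
      exact hlπ m hm.symm
    have := (hrot 1 (right_mem_Icc.mpr zero_le_one)).1
    simp only [hφ1, hφ0, sub_zero, mul_one, zero_mul, zero_sub, zero_eq_neg] at this
    exact (mul_eq_zero.mp this).resolve_right hsin
  intro x hx
  obtain ⟨hφx, hwx⟩ := hrot x hx
  simp only [hφ0, hw0, zero_mul, sub_zero, add_zero] at hφx hwx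
  exact ⟨hφx, (hψconst x hx).trans hψ0, hwx⟩

/-- Definiteness of the Bresse energy norm under the non-resonance condition. -/
theorem bresse_energy_definite
    (l : ℝ) (hl : 0 < l) (hlπ : ∀ m : ℤ, l ≠ m * Real.pi)
    (φ ψ w φ' ψ' w' : ℝ → ℝ)
    (hφ : ∀ x ∈ Set.Icc (0:ℝ) 1, HasDerivAt φ (φ' x) x)
    (hψ : ∀ x ∈ Set.Icc (0:ℝ) 1, HasDerivAt ψ (ψ' x) x)
    (hw : ∀ x ∈ Set.Icc (0:ℝ) 1, HasDerivAt w (w' x) x)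
    (hφ0 : φ 0 = 0) (hφ1 : φ 1 = 0)
    (hψm : ∫ x in (0:ℝ)..1, ψ x = 0)
    (hwm : ∫ x in (0:ℝ)..1, w x = 0)
    (h1 : ∀ᵐ x ∂(volume.restrict (Set.Ioo (0:ℝ) 1)), φ' x + ψ x + l * w x = 0)
    (h2 : ∀ᵐ x ∂(volume.restrict (Set.Ioo (0:ℝ) 1)), ψ' x = 0)
    (h3 : ∀ᵐ x ∂(volume.restrict (Set.Ioo (0:ℝ) 1)), w' x - l * φ x = 0) :
    ∀ x ∈ Set.Icc (0:ℝ) 1, φ x = 0 ∧ ψ x = 0 ∧ w x = 0 :=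
  bresse_energy_definite_general l hlπ φ ψ w φ' ψ' w' hφ hψ hw hφ0 hφ1 hψm h1 h2 h3
end

section
/- Let k, k₀, b, ρ₁, ρ₂, l > 0 and set α = √((ρ₂l²(k+k₀) + kρ₁)/(bl²(k+k₀) + kk₀)). Suppose λ ∈ ℝ \ {0} satisfies both αλ = mπ for some integer m and (k₀ρ₂ − bρ₁)λ² = (k₀/(k+k₀))·(bl²(k+k₀) + kk₀). Then l² = ((k₀ρ₂ − bρ₁)/(k₀ρ₂))·(mπ)² − kρ₁/(ρ₂(k+k₀)). -/
open Real

/-- Resonance condition implies the explicit formula for `l²`. -/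
theorem bresse_resonance_l_squared
    (k k₀ b ρ₁ ρ₂ l : ℝ)
    (hk : 0 < k) (hk₀ : 0 < k₀) (hb : 0 < b) (hρ₁ : 0 < ρ₁) (hρ₂ : 0 < ρ₂) (hl : 0 < l)
    (α : ℝ)
    (hα : α = Real.sqrt ((ρ₂ * l^2 * (k + k₀) + k * ρ₁) / (b * l^2 * (k + k₀) + k * k₀)))
    (lam : ℝ) (hlam : lam ≠ 0) (m : ℤ)
    (h1 : α * lam = m * Real.pi)
    (h2 : (k₀ * ρ₂ - b * ρ₁) * lam^2 = (k₀ / (k + k₀)) * (b * l^2 * (k + k₀) + k * k₀)) :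
    l^2 = ((k₀ * ρ₂ - b * ρ₁) / (k₀ * ρ₂)) * (m * Real.pi)^2 - k * ρ₁ / (ρ₂ * (k + k₀)) := by
  have hD : 0 < b * l^2 * (k + k₀) + k * k₀ := by positivity
  have hN : 0 < ρ₂ * l^2 * (k + k₀) + k * ρ₁ := by positivity
  have hkk : 0 < k + k₀ := by positivity
  have hα2 : α^2 = (ρ₂ * l^2 * (k + k₀) + k * ρ₁) / (b * l^2 * (k + k₀) + k * k₀) := by
    rw [hα, sq_sqrt]; positivity
  have hl2 : 0 < lam^2 := by positivity
  have hc : 0 < k₀ * ρ₂ - b * ρ₁ := by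
    have hr : 0 < (k₀ / (k + k₀)) * (b * l^2 * (k + k₀) + k * k₀) := by positivity
    nlinarith [h2]
  have hm : ((m : ℝ) * Real.pi)^2 * (b * l^2 * (k + k₀) + k * k₀)
      = (ρ₂ * l^2 * (k + k₀) + k * ρ₁) * lam^2 := by
    have hsq : ((m : ℝ) * Real.pi)^2 = α^2 * lam^2 := by rw [← h1]; ring
    have hαD : α^2 * (b * l^2 * (k + k₀) + k * k₀) = ρ₂ * l^2 * (k + k₀) + k * ρ₁ := by
      rw [hα2]; field_simp
    linear_combination lam^2 * hαD + (b * l^2 * (k + k₀) + k * k₀) * hsq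
  have h2' : (k₀ * ρ₂ - b * ρ₁) * lam^2 * (k + k₀) = k₀ * (b * l^2 * (k + k₀) + k * k₀) := by
    rw [h2]; field_simp
  have key : (k₀ * ρ₂ - b * ρ₁) * ((m : ℝ) * Real.pi)^2 * (k + k₀)
      = (ρ₂ * l^2 * (k + k₀) + k * ρ₁) * k₀ := by
    apply mul_left_cancel₀ (ne_of_gt hD)
    linear_combination (k₀ * ρ₂ - b * ρ₁) * (k + k₀) * hm + (ρ₂ * l^2 * (k + k₀) + k * ρ₁) * h2'
  field_simp
  nlinarith [key]
end

section
/- Let k, k₀, b, ρ₁, ρ₂, l > 0 with l ≠ mπ for all m ∈ ℤ. Suppose ψ, w ∈ H²(0,1) with zero mean and ψ'(0) = ψ'(1) = w'(0) = w'(1) = 0, λ ∈ ℝ \ {0}, satisfy: kψ' + l(k+k₀)w' = 0 on (0,1), bψ'' − k(ψ + lw) = −ρ₂λ²ψ, and k₀w'' − lk(ψ + lw) = −ρ₁λ²w. Then ψ = −l(1 + k₀/k)·w, and w satisfies w'' + α²λ²w = 0 where α² = (ρ₂l²(k+k₀) + kρ₁)/(bl²(k+k₀) + kk₀). -/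
/-!
Integrating the first equation, `k ψ + l (k + k₀) w` is constant on `[0, 1]`, and the zero-mean
conditions force the constant to vanish. Hence `ψ` and `ψ''` are the same multiple of `w` and `w''`,
and eliminating the coupling term `ψ + l w` between the remaining two equations leaves the
oscillator equation for `w`.
-/

open Set intervalIntegral

theorem eqOn_Icc_of_hasDerivAt_zero {f : ℝ → ℝ} {a b : ℝ} (hf : ContinuousOn f (Icc a b))
    (hf' : ∀ x ∈ Ioo a b, HasDerivAt f 0 x) : ∀ x ∈ Icc a b, f x = f a := by
  intro x hx
  rcases hx.1.eq_or_lt with rfl | hax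
  · rfl
  obtain ⟨c, -, hc⟩ := exists_hasDerivAt_eq_slope f (fun _ => 0) hax
    (hf.mono (Icc_subset_Icc le_rfl hx.2)) fun y hy => hf' y ⟨hy.1, hy.2.trans_le hx.2⟩
  rw [eq_comm, div_eq_zero_iff, sub_eq_zero] at hc
  exact hc.resolve_right (sub_ne_zero.2 hax.ne')

theorem eqOn_Icc_zero_of_hasDerivAt_zero_of_intervalIntegral_eq_zero {f : ℝ → ℝ} {a b : ℝ}
    (hab : a < b) (hf : ContinuousOn f (Icc a b)) (hf' : ∀ x ∈ Ioo a b, HasDerivAt f 0 x)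
    (hint : ∫ x in a..b, f x = 0) : ∀ x ∈ Icc a b, f x = 0 := by
  have hconst := eqOn_Icc_of_hasDerivAt_zero hf hf'
  have hint_const : ∫ x in a..b, f x = (b - a) * f a := by
    rw [integral_congr fun x hx => hconst x (by rwa [uIcc_of_le hab.le] at hx), integral_const,
      smul_eq_mul]
  have hfa : f a = 0 := by
    rw [hint_const] at hint
    exact (mul_eq_zero.1 hint).resolve_left (sub_ne_zero.2 hab.ne')
  exact fun x hx => (hconst x hx).trans hfa

theorem deriv_eq_const_mul_deriv_of_eqOn {f g : ℝ → ℝ} {s : Set ℝ} {c x : ℝ} (hs : IsOpen s)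
    (hfg : ∀ y ∈ s, f y = c * g y) (hx : x ∈ s) : deriv f x = c * deriv g x := by
  have hfg' : f =ᶠ[nhds x] fun y => c * g y := Filter.eventually_of_mem (hs.mem_nhds hx) hfg
  rw [hfg'.deriv_eq, deriv_const_mul_field']

theorem eq_neg_mul_of_mul_add_mul_eq_zero {k k₀ l p q : ℝ} (hk : k ≠ 0)
    (h : k * p + l * (k + k₀) * q = 0) : p = -l * (1 + k₀ / k) * q := by
  field_simp
  linear_combination h

theorem bresse_oscillator_of_proportional {k k₀ b ρ₁ ρ₂ l lam P P'' W W'' : ℝ}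
    (hk : 0 < k) (hk₀ : 0 < k₀) (hb : 0 < b)
    (hP : P = -l * (1 + k₀ / k) * W) (hP'' : P'' = -l * (1 + k₀ / k) * W'')
    (h₂ : b * P'' - k * (P + l * W) = -ρ₂ * lam ^ 2 * P)
    (h₃ : k₀ * W'' - l * k * (P + l * W) = -ρ₁ * lam ^ 2 * W) :
    W'' + ((ρ₂ * l ^ 2 * (k + k₀) + k * ρ₁) / (b * l ^ 2 * (k + k₀) + k * k₀)) * lam ^ 2 * W
      = 0 := by
  have key : (b * l ^ 2 * (k + k₀) + k * k₀) * W''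
      + (ρ₂ * l ^ 2 * (k + k₀) + k * ρ₁) * lam ^ 2 * W = 0 := by
    subst hP hP''
    linear_combination (norm := skip) (-l * k) * h₂ + k * h₃
    field_simp
    ring
  have hD : b * l ^ 2 * (k + k₀) + k * k₀ ≠ 0 := by positivity
  field_simp
  linear_combination key

theorem bresse_eigen_reduction_general
    (k k₀ b ρ₁ ρ₂ l : ℝ)
    (hk : 0 < k) (hk₀ : 0 < k₀) (hb : 0 < b)
    (ψ w : ℝ → ℝ) (hψ : ContDiff ℝ 2 ψ) (hw : ContDiff ℝ 2 w)
    (hψm : ∫ x in (0:ℝ)..1, ψ x = 0)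
    (hwm : ∫ x in (0:ℝ)..1, w x = 0)
    (lam : ℝ)
    (heq1 : ∀ x ∈ Set.Ioo (0:ℝ) 1, k * deriv ψ x + l * (k + k₀) * deriv w x = 0)
    (heq2 : ∀ x ∈ Set.Ioo (0:ℝ) 1,
      b * deriv (deriv ψ) x - k * (ψ x + l * w x) = -ρ₂ * lam^2 * ψ x)
    (heq3 : ∀ x ∈ Set.Ioo (0:ℝ) 1,
      k₀ * deriv (deriv w) x - l * k * (ψ x + l * w x) = -ρ₁ * lam^2 * w x) :
    (∀ x ∈ Set.Icc (0:ℝ) 1, ψ x = -l * (1 + k₀ / k) * w x) ∧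
    (∀ x ∈ Set.Ioo (0:ℝ) 1,
      deriv (deriv w) x +
        ((ρ₂ * l^2 * (k + k₀) + k * ρ₁) / (b * l^2 * (k + k₀) + k * k₀)) * lam^2 * w x = 0) := by
  have hψd : Differentiable ℝ ψ := hψ.differentiable (by norm_num)
  have hwd : Differentiable ℝ w := hw.differentiable (by norm_num)
  have hmean : ∫ x in (0:ℝ)..1, k * ψ x + l * (k + k₀) * w x = 0 := by
    rw [integral_add ((hψ.continuous.intervalIntegrable 0 1).const_mul k)
      ((hw.continuous.intervalIntegrable 0 1).const_mul _), integral_const_mul,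
      integral_const_mul, hψm, hwm]
    ring
  have hcoupling : ∀ x ∈ Icc (0:ℝ) 1, k * ψ x + l * (k + k₀) * w x = 0 :=
    eqOn_Icc_zero_of_hasDerivAt_zero_of_intervalIntegral_eq_zero zero_lt_one
      ((hψd.const_mul k).add (hwd.const_mul _)).continuous.continuousOn (fun x hx => heq1 x hx ▸
        ((hψd x).hasDerivAt.const_mul k).add ((hwd x).hasDerivAt.const_mul _)) hmean
  have hψw : ∀ x ∈ Icc (0:ℝ) 1, ψ x = -l * (1 + k₀ / k) * w x := fun x hx =>
    eq_neg_mul_of_mul_add_mul_eq_zero hk.ne' (hcoupling x hx)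
  refine ⟨hψw, fun x hx => ?_⟩
  have hψ'' : deriv (deriv ψ) x = -l * (1 + k₀ / k) * deriv (deriv w) x :=
    deriv_eq_const_mul_deriv_of_eqOn isOpen_Ioo
      (fun y hy => eq_neg_mul_of_mul_add_mul_eq_zero hk.ne' (heq1 y hy)) hx
  exact bresse_oscillator_of_proportional hk hk₀ hb (hψw x (Ioo_subset_Icc_self hx)) hψ''
    (heq2 x hx) (heq3 x hx)

/-- Reduction of the residual eigenvalue problem for `(ψ, w)` to a single
harmonic oscillator equation. -/
theorem bresse_eigen_reduction
    (k k₀ b ρ₁ ρ₂ l : ℝ)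
    (hk : 0 < k) (hk₀ : 0 < k₀) (hb : 0 < b) (hρ₁ : 0 < ρ₁) (hρ₂ : 0 < ρ₂) (hl : 0 < l)
    (hlπ : ∀ m : ℤ, l ≠ m * Real.pi)
    (ψ w : ℝ → ℝ) (hψ : ContDiff ℝ 2 ψ) (hw : ContDiff ℝ 2 w)
    (hψm : ∫ x in (0:ℝ)..1, ψ x = 0)
    (hwm : ∫ x in (0:ℝ)..1, w x = 0)
    (hbψ0 : deriv ψ 0 = 0) (hbψ1 : deriv ψ 1 = 0)
    (hbw0 : deriv w 0 = 0) (hbw1 : deriv w 1 = 0)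
    (lam : ℝ) (hlam : lam ≠ 0)
    (heq1 : ∀ x ∈ Set.Ioo (0:ℝ) 1, k * deriv ψ x + l * (k + k₀) * deriv w x = 0)
    (heq2 : ∀ x ∈ Set.Ioo (0:ℝ) 1,
      b * deriv (deriv ψ) x - k * (ψ x + l * w x) = -ρ₂ * lam^2 * ψ x)
    (heq3 : ∀ x ∈ Set.Ioo (0:ℝ) 1,
      k₀ * deriv (deriv w) x - l * k * (ψ x + l * w x) = -ρ₁ * lam^2 * w x) :
    (∀ x ∈ Set.Icc (0:ℝ) 1, ψ x = -l * (1 + k₀ / k) * w x) ∧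
    (∀ x ∈ Set.Ioo (0:ℝ) 1,
      deriv (deriv w) x +
        ((ρ₂ * l^2 * (k + k₀) + k * ρ₁) / (b * l^2 * (k + k₀) + k * k₀)) * lam^2 * w x = 0) :=
  bresse_eigen_reduction_general k k₀ b ρ₁ ρ₂ l hk hk₀ hb ψ w hψ hw hψm hwm lam heq1 heq2 heq3
end
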